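/- If (M, T) is distributed according to ℌ(x,y) = 𝔔_{α,F,C}(F(x), G(y)), then M has distribution function F, and for every n in the support of M, the conditional density of T given M = n equals c(F_α(n), G₁(t₁),…,G_d(t_d))·Π_{i=1}^d g_i(t_i); equivalently the conditional distribution function of T given M = n is t ↦ ∂₁C(F_α(n), G(t)). -/

import Mathlib

open MeasureTheory Set Filter

/-- `F(n-1)` with the convention `F(-1) = 0`. -/
noncomputable def Fm (F : ℕ → ℝ) : ℕ → ℝ := fun n => if n = 0 then 0 else F (n - 1)

/-- `F_α(n) = (1-α) F(n-1) + α F(n)`. -/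
noncomputable def Falpha (α : ℝ) (F : ℕ → ℝ) (n : ℕ) : ℝ :=
  (1 - α) * Fm F n + α * F n

/-- `⌈u⌉_{α,F} = Σ_{n ≥ 0} F_α(n) · 1_{(F(n-1), F(n)]}(u)`, with `⌈0⌉ = 0` automatic. -/
noncomputable def ceilT (α : ℝ) (F : ℕ → ℝ) (u : ℝ) : ℝ :=
  ∑' n : ℕ, Falpha α F n * Set.indicator (Set.Ioc (Fm F n) (F n)) (fun _ => (1 : ℝ)) u

/-- `𝔔_{α,F,C}(u,v) = ∫_{[0,u]×[0,v]} c(⌈s⌉_{α,F}, t) dλ^{d+1}(s,t)`,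
the distribution function of the transformed density. -/
noncomputable def Qbox (d : ℕ) (α : ℝ) (F : ℕ → ℝ) (c : ℝ → (Fin d → ℝ) → ℝ)
    (u : ℝ) (v : Fin d → ℝ) : ℝ :=
  ∫ p in (Set.Icc (0 : ℝ) u) ×ˢ (Set.Icc (0 : Fin d → ℝ) v), c (ceilT α F p.1) p.2

/-! On the `n`-th cell `(F(n-1), F(n)]` of the partition of `(0, 1]` the discretization `⌈s⌉_{α,F}`
is the constant `F_α(n) ∈ [0, 1]`, and it vanishes off the cells. Hence every `s`-section of
`c(⌈s⌉, ·)` has integral `1` over the unit cube, so `𝔔(u, 1) = u` and `M` has distribution `F`;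
and on the cell the integrand is `c(F_α(n), ·)` independently of `s`, so dividing by the cell
length `P(M = n)` returns exactly the density, resp. the partial derivative, of `C` at `F_α(n)`. -/

theorem setIntegral_prod_fun_snd {α β E : Type*} [MeasurableSpace α] [MeasurableSpace β]
    [NormedAddCommGroup E] [NormedSpace ℝ E] {μ : Measure α} {ν : Measure β}
    [SFinite μ] [SFinite ν] (f : β → E) (s : Set α) (t : Set β) :
    ∫ z in s ×ˢ t, f z.2 ∂μ.prod ν = μ.real s • ∫ y in t, f y ∂ν := by
  rw [← Measure.prod_restrict, integral_fun_snd, measureReal_restrict_apply_univ]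

section Discretization

variable {F : ℕ → ℝ} {α : ℝ}

lemma le_Fm_of_lt (hmono : Monotone F) {m n : ℕ} (h : m < n) : F m ≤ Fm F n := by
  rw [Fm, if_neg (by omega)]
  exact hmono (by omega)

lemma Fm_mem_Icc (hF0 : ∀ n, 0 ≤ F n) (hF1 : ∀ n, F n ≤ 1) (n : ℕ) :
    Fm F n ∈ Icc (0 : ℝ) 1 := by
  unfold Fm
  split_ifs
  exacts [⟨le_rfl, zero_le_one⟩, ⟨hF0 _, hF1 _⟩]

lemma Falpha_mem_Icc (hF0 : ∀ n, 0 ≤ F n) (hF1 : ∀ n, F n ≤ 1) (hα : α ∈ Icc (0 : ℝ) 1)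
    (n : ℕ) : Falpha α F n ∈ Icc (0 : ℝ) 1 :=
  convex_Icc (0 : ℝ) 1 (Fm_mem_Icc hF0 hF1 n) ⟨hF0 n, hF1 n⟩ (by linarith [hα.2]) hα.1
    (by ring)

lemma ceilT_eq_of_mem_Ioc (hmono : Monotone F) {n : ℕ} {s : ℝ} (hs : s ∈ Ioc (Fm F n) (F n)) :
    ceilT α F s = Falpha α F n := by
  rw [ceilT, tsum_eq_single n, indicator_of_mem hs, mul_one]
  intro m hm
  refine mul_eq_zero_of_right _ (indicator_of_notMem (fun hsm => ?_) _)
  rcases hm.lt_or_gt with h | h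
  · exact (hsm.2.trans (le_Fm_of_lt hmono h)).not_gt hs.1
  · exact (hs.2.trans (le_Fm_of_lt hmono h)).not_gt hsm.1

lemma ceilT_mem_Icc (hmono : Monotone F) (hF0 : ∀ n, 0 ≤ F n) (hF1 : ∀ n, F n ≤ 1)
    (hα : α ∈ Icc (0 : ℝ) 1) (s : ℝ) : ceilT α F s ∈ Icc (0 : ℝ) 1 := by
  by_cases h : ∃ n, s ∈ Ioc (Fm F n) (F n)
  · obtain ⟨n, hn⟩ := h
    rw [ceilT_eq_of_mem_Ioc hmono hn]
    exact Falpha_mem_Icc hF0 hF1 hα n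
  · simp [ceilT, indicator_of_notMem (fun hs => h ⟨_, hs⟩)]

lemma setIntegral_Ioc_comp_ceilT {E : Type*} [NormedAddCommGroup E] [NormedSpace ℝ E]
    [CompleteSpace E]
    (hmono : Monotone F) {n : ℕ} (hn : Fm F n ≤ F n) (f : ℝ → E) :
    ∫ s in Ioc (Fm F n) (F n), f (ceilT α F s) = (F n - Fm F n) • f (Falpha α F n) := by
  rw [setIntegral_congr_fun measurableSet_Ioc
      (fun s hs => congrArg f (ceilT_eq_of_mem_Ioc hmono hs)),
    setIntegral_const, Real.volume_real_Ioc_of_le hn]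

lemma setIntegral_Ioc_prod_comp_ceilT {β E : Type*} [MeasurableSpace β] {ν : Measure β}
    [SFinite ν] [NormedAddCommGroup E] [NormedSpace ℝ E]
    (hmono : Monotone F) {n : ℕ} (hn : Fm F n ≤ F n) (f : ℝ → β → E) {t : Set β}
    (ht : MeasurableSet t) :
    ∫ p in Ioc (Fm F n) (F n) ×ˢ t, f (ceilT α F p.1) p.2 ∂volume.prod ν =
      (F n - Fm F n) • ∫ w in t, f (Falpha α F n) w ∂ν := by
  rw [setIntegral_congr_fun (measurableSet_Ioc.prod ht)
      (fun p hp => congrFun (congrArg f (ceilT_eq_of_mem_Ioc hmono hp.1)) p.2),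
    setIntegral_prod_fun_snd, Real.volume_real_Ioc_of_le hn]

lemma Qbox_one_of_mem_Icc {d : ℕ} {c : ℝ → (Fin d → ℝ) → ℝ} (hmono : Monotone F)
    (hF0 : ∀ n, 0 ≤ F n) (hF1 : ∀ n, F n ≤ 1) (hα : α ∈ Icc (0 : ℝ) 1)
    (hc_sec : ∀ u ∈ Icc (0 : ℝ) 1, ∫ v in Icc (0 : Fin d → ℝ) 1, c u v = 1)
    (hc_int : IntegrableOn (fun p : ℝ × (Fin d → ℝ) => c (ceilT α F p.1) p.2)
      (Icc (0 : ℝ) 1 ×ˢ Icc (0 : Fin d → ℝ) 1))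
    {u : ℝ} (hu : u ∈ Icc (0 : ℝ) 1) :
    Qbox d α F c u 1 = u := by
  have hint := hc_int.mono_set (prod_mono (Icc_subset_Icc_right hu.2) subset_rfl)
  have hsection : ∀ s, ∫ v in Icc (0 : Fin d → ℝ) 1, c (ceilT α F s) v = 1 :=
    fun s => hc_sec _ (ceilT_mem_Icc hmono hF0 hF1 hα s)
  rw [Measure.volume_eq_prod] at hint
  rw [Qbox, Measure.volume_eq_prod, setIntegral_prod _ hint]
  simp only [hsection]
  rw [setIntegral_const, Real.volume_real_Icc_of_le hu.1, sub_zero, smul_eq_mul, mul_one]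

end Discretization

theorem stmt14_general (d : ℕ) (F : ℕ → ℝ) (hmono : Monotone F) (hF0 : ∀ n, 0 ≤ F n)
    (hF1 : ∀ n, F n ≤ 1)
    (α : ℝ) (hα : α ∈ Set.Ioc (0 : ℝ) 1)
    (c : ℝ → (Fin d → ℝ) → ℝ)
    (hc_sec : ∀ u ∈ Set.Icc (0 : ℝ) 1, ∫ v in Set.Icc (0 : Fin d → ℝ) 1, c u v = 1)
    (hc_int : IntegrableOn (fun p : ℝ × (Fin d → ℝ) => c (ceilT α F p.1) p.2)
      ((Set.Icc (0 : ℝ) 1) ×ˢ (Set.Icc (0 : Fin d → ℝ) 1)))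
    (G g : Fin d → ℝ → ℝ) :
    (∀ m : ℕ, Qbox d α F c (F m) (fun _ => 1) = F m) ∧
    (∀ n : ℕ, 0 < F n - Fm F n → ∀ t : Fin d → ℝ,
      (F n - Fm F n)⁻¹ *
          (∫ s in Set.Ioc (Fm F n) (F n), c (ceilT α F s) (fun i => G i (t i))) *
          ∏ i, g i (t i) =
        c (Falpha α F n) (fun i => G i (t i)) * ∏ i, g i (t i)) ∧
    (∀ n : ℕ, 0 < F n - Fm F n → ∀ t : Fin d → ℝ,
      (F n - Fm F n)⁻¹ *
          ∫ p in (Set.Ioc (Fm F n) (F n)) ×ˢ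
              (Set.Icc (0 : Fin d → ℝ) (fun i => G i (t i))), c (ceilT α F p.1) p.2 =
        ∫ w in Set.Icc (0 : Fin d → ℝ) (fun i => G i (t i)), c (Falpha α F n) w) := by
  have hα' : α ∈ Icc (0 : ℝ) 1 := Ioc_subset_Icc_self hα
  refine ⟨fun m => Qbox_one_of_mem_Icc hmono hF0 hF1 hα' hc_sec hc_int ⟨hF0 m, hF1 m⟩,
    fun n hn t => ?_, fun n hn t => ?_⟩
  · rw [setIntegral_Ioc_comp_ceilT hmono (sub_pos.mp hn).le (fun u => c u fun i => G i (t i)),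
      smul_eq_mul,
      inv_mul_cancel_left₀ hn.ne']
  · rw [Measure.volume_eq_prod,
      setIntegral_Ioc_prod_comp_ceilT hmono (sub_pos.mp hn).le _ measurableSet_Icc, smul_eq_mul,
      inv_mul_cancel_left₀ hn.ne']

/-- if `(M, T)` is distributed according to
`ℌ(x,y) = 𝔔_{α,F,C}(F(x), G(y))`, then (i) `M` has distribution function `F`
(the first marginal of `𝔔` evaluated at `F(m)` is `F(m)`); (ii) for every `n` in the
support of `M` (i.e. `P(N=n) = F(n) − F(n−1) > 0`), the conditional density of `T` given
`M = n` equals `c(F_α(n), G₁(t₁),…,G_d(t_d))·∏ᵢ gᵢ(tᵢ)`; and (iii) equivalently the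
conditional distribution function of `T` given `M = n` is `t ↦ ∂₁C(F_α(n), G(t))`,
where `∂₁C(w, v) = ∫_{[0,v]} c(w, s) ds`. -/
theorem stmt14 (d : ℕ) (F : ℕ → ℝ) (hmono : Monotone F) (hF0 : ∀ n, 0 ≤ F n)
    (hF1 : ∀ n, F n ≤ 1) (hlim : Tendsto F atTop (nhds 1))
    (α : ℝ) (hα : α ∈ Set.Ioc (0 : ℝ) 1)
    (c : ℝ → (Fin d → ℝ) → ℝ)
    (hc_meas : Measurable (Function.uncurry c))
    (hc_nonneg : ∀ u v, 0 ≤ c u v)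
    (hc_sec : ∀ u ∈ Set.Icc (0 : ℝ) 1, ∫ v in Set.Icc (0 : Fin d → ℝ) 1, c u v = 1)
    (hc_int : IntegrableOn (fun p : ℝ × (Fin d → ℝ) => c (ceilT α F p.1) p.2)
      ((Set.Icc (0 : ℝ) 1) ×ˢ (Set.Icc (0 : Fin d → ℝ) 1)))
    (G g : Fin d → ℝ → ℝ) (hG : ∀ i x, G i x ∈ Set.Icc (0 : ℝ) 1) :
    (∀ m : ℕ, Qbox d α F c (F m) (fun _ => 1) = F m) ∧
    (∀ n : ℕ, 0 < F n - Fm F n → ∀ t : Fin d → ℝ,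
      (F n - Fm F n)⁻¹ *
          (∫ s in Set.Ioc (Fm F n) (F n), c (ceilT α F s) (fun i => G i (t i))) *
          ∏ i, g i (t i) =
        c (Falpha α F n) (fun i => G i (t i)) * ∏ i, g i (t i)) ∧
    (∀ n : ℕ, 0 < F n - Fm F n → ∀ t : Fin d → ℝ,
      (F n - Fm F n)⁻¹ *
          ∫ p in (Set.Ioc (Fm F n) (F n)) ×ˢ
              (Set.Icc (0 : Fin d → ℝ) (fun i => G i (t i))), c (ceilT α F p.1) p.2 =
        ∫ w in Set.Icc (0 : Fin d → ℝ) (fun i => G i (t i)), c (Falpha α F n) w) :=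
  stmt14_general d F hmono hF0 hF1 α hα c hc_sec hc_int G g
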